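/- Let X be a Type I ω₁-compact space, E ⊆ X closed and unbounded, and f : X → L≥0 continuous and unbounded on E. Then the set C(f,E) = { x ∈ E : there is α < ω₁ with x ∈ B_α(X) and f(x) ≥ α } is closed and unbounded in X. -/

import Mathlib

open Set Topology

noncomputable section

universe u

/-- The ordinal ω₁. -/
def omega1 : Ordinal.{0} := (Cardinal.aleph 1).ord

theorem omega1_pos : (0 : Ordinal.{0}) < omega1 := by
  have := Cardinal.ord_lt_ord.mpr (Cardinal.aleph_pos 1)
  simpa [omega1, Cardinal.ord_zero] using this

theorem omega1_isLimit : Order.IsSuccLimit omega1 :=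
  Cardinal.isSuccLimit_ord (Cardinal.aleph0_le_aleph 1)

/-- ω₁ as a type (the set of countable ordinals). -/
def W : Type 1 := {a : Ordinal.{0} // a < omega1}

instance : LinearOrder W := by unfold W; infer_instance
instance : TopologicalSpace W := Preorder.topology W
instance : OrderTopology W := ⟨rfl⟩

def w0 : W := ⟨0, omega1_pos⟩
def Wsucc (a : W) : W := ⟨Order.succ a.1, omega1_isLimit.succ_lt a.2⟩

/-- The closed long ray: ω₁ × [0,1) with the lexicographic order topology. -/
def LongRay : Type 1 := W ×ₗ ↥(Set.Ico (0:ℝ) 1)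

instance : LinearOrder LongRay := by unfold LongRay; infer_instance
instance : TopologicalSpace LongRay := Preorder.topology LongRay
instance : OrderTopology LongRay := ⟨rfl⟩

/-- Embedding of ω₁ into the long ray as the points (α, 0). -/
def iW (a : W) : LongRay := toLex (a, ⟨0, le_rfl, one_pos⟩)
def lrZero : LongRay := iW w0

/-- A subset of ω₁ is unbounded. -/
def WUnbounded (S : Set W) : Prop := ∀ a : W, ∃ b ∈ S, a < b
/-- A subset of ω₁ is closed (in the order sense). -/
def WClosed (S : Set W) : Prop :=
  ∀ a : W, (∃ b, b < a) → (∀ b, b < a → ∃ c ∈ S, b < c ∧ c < a) → a ∈ S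
def WClub (S : Set W) : Prop := WClosed S ∧ WUnbounded S
def WStationary (A : Set W) : Prop := ∀ C : Set W, WClub C → (A ∩ C).Nonempty

/-- A Type I space structure on `X`. -/
structure TypeI (X : Type u) [TopologicalSpace X] where
  seq : W → Set X
  isOpen : ∀ a, IsOpen (seq a)
  lindelof : ∀ a, IsLindelof (closure (seq a))
  mono : ∀ a b : W, a < b → closure (seq a) ⊆ seq b
  covers : ∀ x : X, ∃ a, x ∈ seq a

variable {X : Type u} [TopologicalSpace X]

/-- A subset is bounded if contained in some `X_α`. -/
def TypeI.Bdd (hT : TypeI X) (A : Set X) : Prop := ∃ a, A ⊆ hT.seq a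
/-- Club: closed and unbounded. -/
def TypeI.Club (hT : TypeI X) (A : Set X) : Prop := IsClosed A ∧ ¬ hT.Bdd A
/-- A predirection: an unbounded set such that any function unbounded on it is
unbounded on every unbounded subset of it. -/
def TypeI.Predirection (hT : TypeI X) (D : Set X) : Prop :=
  ¬ hT.Bdd D ∧ ∀ f : X → LongRay, Continuous f → ¬ BddAbove (f '' D) →
    ∀ A ⊆ D, ¬ hT.Bdd A → ¬ BddAbove (f '' A)
/-- A direction: a closed predirection. -/
def TypeI.IsDirection (hT : TypeI X) (D : Set X) : Prop := IsClosed D ∧ hT.Predirection D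
/-- The bones. -/
def TypeI.bone (hT : TypeI X) (a : W) : Set X := closure (hT.seq a) \ hT.seq a
/-- The sequence is canonical. -/
def TypeI.Canonical (hT : TypeI X) : Prop :=
  ∀ a : W, Order.IsSuccLimit a.1 → hT.seq a = ⋃ b ∈ {b : W | b < a}, hT.seq b
/-- A slicer. -/
def TypeI.Slicer (hT : TypeI X) (s : X → LongRay) : Prop :=
  Continuous s ∧ ∀ a : W, ∀ x ∈ closure (hT.seq (Wsucc a)) \ hT.seq a,
    s x ∈ Set.Icc (iW a) (iW (Wsucc a))

/-- ω-bounded: closures of countable sets are compact. -/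
def OmegaBounded (X : Type u) [TopologicalSpace X] : Prop :=
  ∀ S : Set X, S.Countable → IsCompact (closure S)
/-- ω₁-compact: no uncountable closed discrete subset. -/
def Omega1Compact (X : Type u) [TopologicalSpace X] : Prop :=
  ∀ C : Set X, IsClosed C → DiscreteTopology C → C.Countable
/-- Countably tight. -/
def CountablyTight (X : Type u) [TopologicalSpace X] : Prop :=
  ∀ (A : Set X) (x : X), x ∈ closure A → ∃ B ⊆ A, B.Countable ∧ x ∈ closure B


/-! ### Auxiliary lemmas -/

lemma lt_Wsucc (a : W) : a < Wsucc a := show a.1 < Order.succ a.1 from Order.lt_succ a.1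

lemma Wsucc_le_iff {a b : W} : Wsucc a ≤ b ↔ a < b :=
  show Order.succ a.1 ≤ b.1 ↔ a.1 < b.1 from Order.succ_le_iff

def lrFst (z : LongRay) : W := (ofLex z).1

lemma iW_le_iff {a : W} {z : LongRay} : iW a ≤ z ↔ a ≤ lrFst z := by
  have h := Prod.Lex.le_iff (α := W) (β := ↥(Set.Ico (0:ℝ) 1)) (x := toLex (a, ⟨0, le_rfl, one_pos⟩)) (y := z)
  constructor
  · intro hle
    rcases h.1 hle with h1 | ⟨h1, _⟩
    · exact le_of_lt h1
    · exact le_of_eq h1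
  · intro hle
    rcases lt_or_eq_of_le hle with h1 | h1
    · exact h.2 (Or.inl h1)
    · exact h.2 (Or.inr ⟨h1, (ofLex z).2.2.1⟩)

lemma iW_mono {a b : W} (h : a ≤ b) : iW a ≤ iW b := iW_le_iff.2 h

lemma lt_iW_Wsucc (z : LongRay) : z < iW (Wsucc (lrFst z)) := by
  have h := Prod.Lex.lt_iff (α := W) (β := ↥(Set.Ico (0:ℝ) 1)) (x := z)
    (y := toLex (Wsucc (lrFst z), ⟨0, le_rfl, one_pos⟩))
  exact h.2 (Or.inl (show (lrFst z).1 < Order.succ (lrFst z).1 from Order.lt_succ _))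

lemma omega1_cof : omega1.cof = Cardinal.aleph 1 := Cardinal.isRegular_aleph_one.cof_eq

lemma W_bdd (S : Set W) (h : S.Countable) : ∃ b : W, ∀ a ∈ S, a < b := by
  rcases S.eq_empty_or_nonempty with rfl | hne
  · exact ⟨w0, by simp⟩
  obtain ⟨g, hg⟩ := h.exists_eq_range hne
  have holt : (⨆ n : ℕ, Order.succ (g n).1) < omega1 := by
    apply Ordinal.iSup_lt_ord _ (fun n => omega1_isLimit.succ_lt (g n).2)
    rw [Cardinal.mk_nat, omega1_cof]
    exact Cardinal.aleph0_lt_aleph_one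
  refine ⟨⟨_, holt⟩, fun a ha => ?_⟩
  rw [hg] at ha
  obtain ⟨n, rfl⟩ := ha
  exact show (g n).1 < (⨆ n : ℕ, Order.succ (g n).1) from
    lt_of_lt_of_le (Order.lt_succ _) (Ordinal.le_iSup (fun n => Order.succ (g n).1) n)

lemma W_Iio_countable (d : W) : (Set.Iio d).Countable := by
  have h1 : (Set.Iio d.1).Countable := by
    rw [Cardinal.countable_iff_lt_aleph_one, Ordinal.mk_Iio_ordinal]
    have h3 : d.1.card < Cardinal.aleph 1 := Cardinal.lt_ord.1 d.2
    have := Cardinal.lift_lt.{0,1}.2 h3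
    rwa [Cardinal.lift_aleph, Ordinal.lift_one] at this
  have heq : Set.Iio d = (Subtype.val) ⁻¹' (Set.Iio d.1) := rfl
  rw [heq]
  exact h1.preimage Subtype.coe_injective

lemma W_least {P : W → Prop} (h : ∃ a, P a) : ∃ a, P a ∧ ∀ b, b < a → ¬ P b := by
  obtain ⟨a, ha⟩ := h
  set Q : Set Ordinal := {o : Ordinal | ∃ h : o < omega1, P ⟨o, h⟩} with hQdef
  have hQ : Q.Nonempty := ⟨a.1, a.2, ha⟩
  obtain ⟨hlt, hP⟩ := Ordinal.lt_wf.min_mem Q hQ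
  refine ⟨⟨_, hlt⟩, hP, fun b hb hPb => ?_⟩
  exact Ordinal.lt_wf.not_lt_min Q (show b.1 ∈ Q from ⟨b.2, hPb⟩) hb

lemma lr_bddAbove_of_lindelof {A : Set LongRay} (h : IsLindelof A) : BddAbove A := by
  have hcov : A ⊆ ⋃ b : W, Iio (iW (Wsucc b)) := fun z _ =>
    mem_iUnion.2 ⟨lrFst z, lt_iW_Wsucc z⟩
  obtain ⟨r, hrc, hrs⟩ := h.elim_countable_subcover _ (fun _ => isOpen_Iio) hcov
  obtain ⟨b, hb⟩ := W_bdd r hrc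
  refine ⟨iW (Wsucc b), fun z hz => ?_⟩
  obtain ⟨c, hc, hzc⟩ := mem_iUnion₂.1 (hrs hz)
  refine le_of_lt (lt_of_lt_of_le hzc (iW_mono ?_))
  exact show Order.succ c.1 ≤ Order.succ b.1 from Order.succ_le_succ (le_of_lt (hb c hc))

variable {X : Type u} [TopologicalSpace X]

lemma seq_mono_le (hT : TypeI X) {a b : W} (h : a ≤ b) : hT.seq a ⊆ hT.seq b := by
  rcases lt_or_eq_of_le h with h | rfl
  · exact subset_closure.trans (hT.mono a b h)
  · exact subset_rfl

lemma closure_seq_mono_le (hT : TypeI X) {a b : W} (h : a ≤ b) :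
    closure (hT.seq a) ⊆ closure (hT.seq b) := closure_mono (seq_mono_le hT h)

lemma seq_subset_closure_of_le (hT : TypeI X) {a b : W} (h : a ≤ b) :
    hT.seq a ⊆ closure (hT.seq b) := (seq_mono_le hT h).trans subset_closure

lemma f_big {f : X → LongRay} (hf : Continuous f) {A : Set X} {c : W}
    (hA : ∀ x ∈ A, iW c ≤ f x) {y : X} (hy : y ∈ closure A) : iW c ≤ f y := by
  have hcl : IsClosed (f ⁻¹' Ici (iW c)) := isClosed_Ici.preimage hf
  exact hcl.closure_subset (closure_mono (fun x hx => hA x hx) hy)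

lemma exists_big (hT : TypeI X) {E : Set X} {f : X → LongRay} (hf : Continuous f)
    (hunb : ¬ BddAbove (f '' E)) (a : W) :
    ∃ x, x ∈ E ∧ x ∉ closure (hT.seq a) ∧ iW a ≤ f x := by
  have hL : IsLindelof (f '' closure (hT.seq a)) := (hT.lindelof a).image hf
  obtain ⟨u, hu⟩ := lr_bddAbove_of_lindelof hL
  have hex : ∃ z ∈ f '' E, ¬ z ≤ max u (iW a) := by
    by_contra hcon
    push_neg at hcon
    exact hunb ⟨_, fun z hz => hcon z hz⟩
  obtain ⟨z, ⟨x, hxE, rfl⟩, hz⟩ := hex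
  refine ⟨x, hxE, ?_, ?_⟩
  · intro hx
    exact hz (le_trans (hu (mem_image_of_mem f hx)) (le_max_left _ _))
  · exact le_of_lt (lt_of_le_of_lt (le_max_right u (iW a)) (not_le.1 hz))

lemma exists_acc (h1 : Omega1Compact X) {Y : Set X} (hY : ¬ Y.Countable) :
    ∃ y : X, y ∈ closure (Y \ {y}) := by
  by_contra hcon
  push_neg at hcon
  have hd : ∀ z : X, Disjoint (𝓝[≠] z) (Filter.principal Y) := by
    intro z
    have h2 := hcon z
    rw [mem_closure_iff_nhdsWithin_neBot, Filter.not_neBot] at h2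
    rw [disjoint_iff]
    have h3 : Y \ {z} = {z}ᶜ ∩ Y := by rw [Set.diff_eq, Set.inter_comm]
    rw [h3, nhdsWithin_inter'] at h2
    exact h2
  have h2 := isClosed_and_discrete_iff.2 hd
  have := h1 Y h2.1 (isDiscrete_iff_discreteTopology.mp h2.2)
  exact hY this

lemma mem_bone_iff (hT : TypeI X) {x : X} {a : W} :
    x ∈ hT.bone a ↔ x ∈ closure (hT.seq a) ∧ x ∉ hT.seq a := Iff.rfl

/-- The set C(f,E) is club. -/
theorem stmt_6 {X : Type u} [TopologicalSpace X] [T2Space X] (hT : TypeI X)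
    (hcan : hT.Canonical) (h1 : Omega1Compact X) (E : Set X) (hE : hT.Club E)
    (f : X → LongRay) (hf : Continuous f) (hunb : ¬ BddAbove (f '' E)) :
    hT.Club {x ∈ E | ∃ a : W, x ∈ hT.bone a ∧ iW a ≤ f x} := by
  set C : Set X := {x ∈ E | ∃ a : W, x ∈ hT.bone a ∧ iW a ≤ f x} with hCdef
  have hCsub : C ⊆ E := sep_subset _ _
  refine ⟨?_, ?_⟩
  · -- C is closed
    apply isClosed_of_closure_subset
    intro y hy
    have hyE : y ∈ E := hE.1.closure_subset (closure_mono hCsub hy)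
    obtain ⟨μ, hμ⟩ := hT.covers y
    obtain ⟨ν, hν, hνmin⟩ := W_least (P := fun c => y ∈ closure (hT.seq c))
      ⟨μ, subset_closure hμ⟩
    have haux : ∀ b, b < ν → iW (Wsucc b) ≤ f y := by
      intro b hb
      have hyb : y ∉ closure (hT.seq b) := hνmin b hb
      have hy2 : y ∈ closure ((closure (hT.seq b))ᶜ ∩ C) :=
        isClosed_closure.isOpen_compl.inter_closure ⟨hyb, hy⟩
      apply f_big hf ?_ hy2
      rintro x ⟨hxb, hxE, a, hbone, hxa3⟩
      obtain ⟨hxa1, hxa2⟩ := (mem_bone_iff hT).1 hbone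
      have hba : b < a := by
        by_contra hcon
        exact hxb (closure_seq_mono_le hT (not_lt.1 hcon) hxa1)
      exact le_trans (iW_mono (Wsucc_le_iff.2 hba)) hxa3
    have hCν : ∀ x ∈ C, x ∈ hT.seq ν → ∃ a, a < ν ∧ x ∈ closure (hT.seq a) := by
      rintro x ⟨hxE, a, hbone, _⟩ hxν
      obtain ⟨hxa1, hxa2⟩ := (mem_bone_iff hT).1 hbone
      refine ⟨a, ?_, hxa1⟩
      by_contra hcon
      exact hxa2 (seq_mono_le hT (not_lt.1 hcon) hxν)
    have hynν : y ∉ hT.seq ν := by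
      intro hyν
      rcases Ordinal.zero_or_succ_or_isSuccLimit ν.1 with h0 | ⟨m, hm⟩ | hlim
      · have h2 : y ∈ closure (hT.seq ν ∩ C) := (hT.isOpen ν).inter_closure ⟨hyν, hy⟩
        have hemp : hT.seq ν ∩ C = ∅ := by
          ext x
          simp only [mem_inter_iff, mem_empty_iff_false, iff_false, not_and]
          intro hx1 hx2
          obtain ⟨a, ha, _⟩ := hCν x hx2 hx1
          have : a.1 < (0 : Ordinal) := h0 ▸ (ha : a.1 < ν.1)
          exact absurd this (not_lt_of_ge (zero_le (a := a.1)))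
        rw [hemp] at h2
        simp at h2
      · replace hm := hm.symm
        have hmlt : m < omega1 := lt_trans (hm ▸ Order.lt_succ m) ν.2
        set b : W := ⟨m, hmlt⟩ with hbdef
        have hbν : b < ν := show m < ν.1 by rw [hm]; exact Order.lt_succ m
        have hyb : y ∉ closure (hT.seq b) := hνmin b hbν
        have h2 : y ∈ closure ((hT.seq ν ∩ (closure (hT.seq b))ᶜ) ∩ C) :=
          ((hT.isOpen ν).inter isClosed_closure.isOpen_compl).inter_closure ⟨⟨hyν, hyb⟩, hy⟩
        have hemp : (hT.seq ν ∩ (closure (hT.seq b))ᶜ) ∩ C = ∅ := by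
          ext x
          simp only [mem_inter_iff, mem_empty_iff_false, iff_false, not_and]
          rintro ⟨hx1, hx2⟩ hx3
          obtain ⟨a, ha, hacl⟩ := hCν x hx3 hx1
          have hab : a ≤ b := show a.1 ≤ m from Order.lt_succ_iff.1 (hm ▸ (ha : a.1 < ν.1))
          exact hx2 (closure_seq_mono_le hT hab hacl)
        rw [hemp] at h2
        simp at h2
      · rw [hcan ν hlim] at hyν
        simp only [mem_setOf_eq, mem_iUnion] at hyν
        obtain ⟨b, hb, hyb⟩ := hyν
        exact hνmin b hb (subset_closure hyb)
    have hfν : iW ν ≤ f y := by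
      rw [iW_le_iff]
      by_contra hcon
      have hb : lrFst (f y) < ν := not_le.1 hcon
      have h2 := haux _ hb
      rw [iW_le_iff] at h2
      exact (lt_Wsucc _).not_ge h2
    exact ⟨hyE, ν, (mem_bone_iff hT).2 ⟨hν, hynν⟩, hfν⟩
  · -- C is unbounded
    rintro ⟨a₀, hC⟩
    choose x hxE hxcl hxf using fun a : W => exists_big hT hf hunb a
    choose β hβ using hT.covers
    set S : Set W := {a | ∀ b, b < a → β (x b) < a} with hSdef
    have hSunb : ∀ c : W, ∃ s ∈ S, c < s := by
      intro c
      have hF : ∀ d : W, ∃ e : W, d < e ∧ ∀ b, b < d → β (x b) < e := by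
        intro d
        obtain ⟨e, he⟩ := W_bdd ((fun b => β (x b)) '' (Iio d) ∪ {d})
          (((W_Iio_countable d).image _).union (countable_singleton d))
        exact ⟨e, he d (Or.inr rfl), fun b hb => he _ (Or.inl (mem_image_of_mem _ hb))⟩
      choose F hF1 hF2 using hF
      let h : ℕ → W := fun n => Nat.recAux c (fun _ p => F p) n
      have hstep : ∀ n : ℕ, h (n + 1) = F (h n) := fun n => rfl
      have holt : (⨆ n : ℕ, (h n).1) < omega1 := by
        apply Ordinal.iSup_lt_ord _ (fun n => (h n).2)
        rw [Cardinal.mk_nat, omega1_cof]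
        exact Cardinal.aleph0_lt_aleph_one
      set s : W := ⟨_, holt⟩ with hsdef
      have hle : ∀ n, h n ≤ s := fun n =>
        show (h n).1 ≤ (⨆ n : ℕ, (h n).1) from Ordinal.le_iSup (fun n => (h n).1) n
      have hltn : ∀ b : W, b < s → ∃ n, b < h n := by
        intro b hb
        have h2 : b.1 < ⨆ n : ℕ, (h n).1 := hb
        rw [Ordinal.lt_iSup_iff] at h2
        exact h2
      refine ⟨s, ?_, ?_⟩
      · intro b hb
        obtain ⟨n, hn⟩ := hltn b hb
        have := hF2 (h n) b hn
        rw [← hstep n] at this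
        exact lt_of_lt_of_le this (hle (n + 1))
      · have h0 : h 0 = c := rfl
        have := hF1 (h 0)
        rw [← hstep 0, h0] at this
        exact lt_of_lt_of_le this (hle 1)
    set T : Set W := {a | a ∈ S ∧ a₀ < a} with hTdef
    set Y : Set X := x '' T with hYdef
    have hYE : Y ⊆ E := by
      rintro _ ⟨a, _, rfl⟩
      exact hxE a
    have hYunc : ¬ Y.Countable := by
      intro hc
      obtain ⟨b, hb⟩ := W_bdd (β '' Y) (hc.image _)
      obtain ⟨s, hsS, hs⟩ := hSunb (max a₀ b)
      have hsT : s ∈ T := ⟨hsS, lt_of_le_of_lt (le_max_left _ _) hs⟩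
      have hβs : β (x s) < s :=
        lt_trans (hb _ (mem_image_of_mem β (mem_image_of_mem x hsT)))
          (lt_of_le_of_lt (le_max_right _ _) hs)
      exact hxcl s (seq_subset_closure_of_le hT (le_of_lt hβs) (hβ (x s)))
    obtain ⟨y, hyacc⟩ := exists_acc h1 hYunc
    have hyY : y ∈ closure Y := closure_mono diff_subset hyacc
    have hyE : y ∈ E := hE.1.closure_subset (closure_mono hYE hyY)
    obtain ⟨μ, hμ⟩ := hT.covers y
    have hseq_idx : ∀ a c : W, x a ∈ hT.seq c → a < c := by
      intro a c hac
      by_contra hcon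
      exact hxcl a (seq_subset_closure_of_le hT (not_lt.1 hcon) hac)
    set P : W → Set X := fun c => x '' (T ∩ Iio c) \ {y} with hPdef
    have hμP : y ∈ closure (P μ) := by
      have h2 : y ∈ closure (hT.seq μ ∩ (Y \ {y})) :=
        (hT.isOpen μ).inter_closure ⟨hμ, hyacc⟩
      apply closure_mono ?_ h2
      rintro z ⟨hz1, ⟨a, haT, rfl⟩, hz3⟩
      exact ⟨⟨a, ⟨haT, hseq_idx a μ hz1⟩, rfl⟩, hz3⟩
    obtain ⟨lam, hlam, hlmin⟩ := W_least (P := fun c => y ∈ closure (P c)) ⟨μ, hμP⟩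
    obtain ⟨a₁, ha₁T, ha₁lt⟩ : ∃ a₁, a₁ ∈ T ∧ a₁ < lam := by
      by_contra hcon
      push_neg at hcon
      have hemp : T ∩ Iio lam = ∅ := by
        ext a
        simp only [mem_inter_iff, mem_Iio, mem_empty_iff_false, iff_false, not_and]
        intro haT
        exact not_lt.2 (hcon a haT)
      have hPemp : P lam = ∅ := by simp [hPdef, hemp]
      rw [hPemp] at hlam
      simp at hlam
    have hnsucc : ∀ η : W, lam ≠ Wsucc η := by
      intro η heq
      have hsplit : P lam ⊆ P η ∪ ({x η} \ {y}) := by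
        rintro z ⟨⟨a, ⟨haT, halt⟩, rfl⟩, hzy⟩
        have haη : a ≤ η := by
          have h2 : a < Wsucc η := heq ▸ halt
          exact show a.1 ≤ η.1 from Order.lt_succ_iff.1 (show a.1 < Order.succ η.1 from h2)
        rcases lt_or_eq_of_le haη with h2 | h2
        · exact Or.inl ⟨⟨a, ⟨haT, h2⟩, rfl⟩, hzy⟩
        · exact Or.inr ⟨by rw [h2]; exact rfl, hzy⟩
      have h2 := closure_mono hsplit hlam
      rw [closure_union] at h2
      rcases h2 with h2 | h2
      · exact hlmin η (by rw [heq]; exact lt_Wsucc η) h2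
      · rcases eq_or_ne (x η) y with he | he
        · rw [he] at h2
          simp at h2
        · have h3 : ({x η} \ {y} : Set X) = {x η} := by
            ext z
            simp only [Set.mem_diff, Set.mem_singleton_iff]
            exact ⟨fun hz => hz.1, fun hz => ⟨hz, hz ▸ he⟩⟩
          rw [h3, closure_singleton] at h2
          exact he (mem_singleton_iff.1 h2).symm
    have hsucclt : ∀ b, b < lam → Wsucc b < lam := by
      intro b hb
      rcases lt_or_eq_of_le (Wsucc_le_iff.2 hb) with h2 | h2
      · exact h2
      · exact absurd h2.symm (hnsucc b)
    have hstep : ∀ b, b < lam → y ∈ closure (x '' (T ∩ Ico (Wsucc b) lam) \ {y}) := by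
      intro b hb
      have hsplit : P lam ⊆ P (Wsucc b) ∪ (x '' (T ∩ Ico (Wsucc b) lam) \ {y}) := by
        rintro z ⟨⟨a, ⟨haT, halt⟩, rfl⟩, hzy⟩
        rcases lt_or_ge a (Wsucc b) with h2 | h2
        · exact Or.inl ⟨⟨a, ⟨haT, h2⟩, rfl⟩, hzy⟩
        · exact Or.inr ⟨⟨a, ⟨haT, h2, halt⟩, rfl⟩, hzy⟩
      have h2 := closure_mono hsplit hlam
      rw [closure_union] at h2
      exact h2.resolve_left (hlmin _ (hsucclt b hb))
    have hfy : iW lam ≤ f y := by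
      rw [iW_le_iff]
      by_contra hcon
      have hb : lrFst (f y) < lam := not_le.1 hcon
      have hbound : ∀ z ∈ x '' (T ∩ Ico (Wsucc (lrFst (f y))) lam) \ {y},
          iW (Wsucc (lrFst (f y))) ≤ f z := by
        rintro z ⟨⟨a, ⟨haT, ha1, _⟩, rfl⟩, _⟩
        exact le_trans (iW_mono ha1) (hxf a)
      have h2 := f_big hf hbound (hstep _ hb)
      rw [iW_le_iff] at h2
      exact (lt_Wsucc _).not_ge h2
    have hynot : ∀ b, b < lam → y ∉ hT.seq b := by
      intro b hb hyb
      have h2 : y ∈ closure (hT.seq b ∩ (x '' (T ∩ Ico (Wsucc b) lam) \ {y})) :=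
        (hT.isOpen b).inter_closure ⟨hyb, hstep b hb⟩
      have hemp : hT.seq b ∩ (x '' (T ∩ Ico (Wsucc b) lam) \ {y}) = ∅ := by
        ext z
        simp only [mem_inter_iff, mem_empty_iff_false, iff_false, not_and]
        rintro hz1 ⟨⟨a, ⟨haT, ha1, _⟩, rfl⟩, _⟩
        have h3 : a < b := hseq_idx a b hz1
        exact absurd h3 (not_lt.2 (le_trans (le_of_lt (lt_Wsucc b)) ha1))
      rw [hemp] at h2
      simp at h2
    have hlim : Order.IsSuccLimit lam.1 := by
      refine Ordinal.isSuccLimit_iff.2 ⟨?_, Order.isSuccPrelimit_iff_succ_lt.2 fun o ho => ?_⟩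
      · intro h0
        have : a₁.1 < lam.1 := ha₁lt
        rw [h0] at this
        exact (not_lt_of_ge (zero_le (a := a₁.1))) this
      · exact hsucclt ⟨o, lt_trans ho lam.2⟩ ho
    have hlamS : lam ∈ S := by
      intro b hb
      have h2 := hstep b hb
      have hne : (x '' (T ∩ Ico (Wsucc b) lam) \ {y}).Nonempty := by
        by_contra hcon
        rw [not_nonempty_iff_eq_empty] at hcon
        rw [hcon] at h2
        simp at h2
      obtain ⟨z, ⟨a, ⟨⟨haS, _⟩, ha1, ha2⟩, rfl⟩, _⟩ := hne
      exact lt_trans (haS b (lt_of_lt_of_le (lt_Wsucc b) ha1)) ha2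
    have hycl : y ∈ closure (hT.seq lam) := by
      apply closure_mono ?_ hlam
      rintro z ⟨⟨a, ⟨haT, halt⟩, rfl⟩, _⟩
      exact seq_mono_le hT (le_of_lt (hlamS a halt)) (hβ (x a))
    have hynlam : y ∉ hT.seq lam := by
      intro hyl
      rw [hcan lam hlim] at hyl
      simp only [mem_setOf_eq, mem_iUnion] at hyl
      obtain ⟨b, hb, hyb⟩ := hyl
      exact hynot b hb hyb
    have hyC : y ∈ C := ⟨hyE, lam, (mem_bone_iff hT).2 ⟨hycl, hynlam⟩, hfy⟩
    exact hynot a₀ (lt_trans ha₁T.2 ha₁lt) (hC hyC)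


end
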